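/- arXiv:1601.00508 — 4 statements merged into one kernel-verified Lean document; each statement's English description precedes it below -/
import Mathlib

section
/- Let A : ℝ → ℝ^{n×n} be continuous and let Φ(t) be the solution of Φ' = A(t)Φ, Φ(0) = e₀. Suppose there are constants k ≥ 1, λ > 0 with |Φ(t)| ≤ k e^{-λt}|e₀| for all solutions and all t ≥ 0, and |A(t)| ≤ μ for all t. Then for every symmetric positive definite Q, the matrix P = ∫₀^∞ M(s)ᵀ Q M(s) ds, where M(s) is the fundamental matrix solution (M' = A M, M(0) = I), is well-defined, symmetric, and satisfies (λ_min(Q)/(2μ))·I ≤ P ≤ (k²λ_max(Q)/(2λ))·I. -/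
/-!
Both bounds come from comparing `‖M s v‖²` with exponentials. The decay hypothesis gives
`‖M s v‖ ≤ k e^{-λ s} ‖v‖`, which also makes `s ↦ M(s)ᵀ Q M(s)` integrable on `(0, ∞)`. In the
other direction, `d/ds ‖M s v‖² = 2⟪M s v, A s (M s v)⟫ ≥ -2μ ‖M s v‖²`, so
`e^{2μ s} ‖M s v‖²` is nondecreasing and `‖M s v‖² ≥ e^{-2μ s} ‖v‖²`. Since
`⟪v, P v⟫ = ∫₀^∞ ⟪M s v, Q (M s v)⟫ ds`, integrating these against `∫₀^∞ e^{-b s} ds = 1 / b`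
gives the two bounds, and symmetry of `P` is inherited from that of `Q`.
-/

open MeasureTheory Real Set

lemma integral_const_mul_exp_neg_mul_Ioi (c : ℝ) {b : ℝ} (hb : 0 < b) :
    ∫ s in Ioi (0:ℝ), c * exp (-b * s) = c / b := by
  rw [integral_const_mul, integral_exp_mul_Ioi (neg_neg_of_pos hb)]
  simp only [mul_zero, exp_zero, div_neg, mul_neg]
  ring

lemma div_le_setIntegral_Ioi_of_le {φ : ℝ → ℝ} (hφ : IntegrableOn φ (Ioi 0)) {c b : ℝ}
    (hb : 0 < b) (h : ∀ s > 0, c * exp (-b * s) ≤ φ s) :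
    c / b ≤ ∫ s in Ioi (0:ℝ), φ s := by
  rw [← integral_const_mul_exp_neg_mul_Ioi c hb]
  exact setIntegral_mono_on ((exp_neg_integrableOn_Ioi 0 hb).const_mul c) hφ measurableSet_Ioi h

lemma setIntegral_Ioi_le_div_of_le {φ : ℝ → ℝ} (hφ : IntegrableOn φ (Ioi 0)) {c b : ℝ}
    (hb : 0 < b) (h : ∀ s > 0, φ s ≤ c * exp (-b * s)) :
    ∫ s in Ioi (0:ℝ), φ s ≤ c / b := by
  rw [← integral_const_mul_exp_neg_mul_Ioi c hb]
  exact setIntegral_mono_on hφ ((exp_neg_integrableOn_Ioi 0 hb).const_mul c) measurableSet_Ioi h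

section InnerProductSpace

variable {E : Type*} [NormedAddCommGroup E] [InnerProductSpace ℝ E]

lemma monotoneOn_exp_mul_norm_sq {y y' : ℝ → E} {μ : ℝ}
    (hy : ∀ s ≥ 0, HasDerivAt y (y' s) s) (hy' : ∀ s ≥ 0, ‖y' s‖ ≤ μ * ‖y s‖) :
    MonotoneOn (fun s => exp (2 * μ * s) * ‖y s‖ ^ 2) (Ici 0) := by
  have hderiv : ∀ s ≥ 0, HasDerivAt (fun s => exp (2 * μ * s) * ‖y s‖ ^ 2)
      (2 * μ * exp (2 * μ * s) * ‖y s‖ ^ 2 + exp (2 * μ * s) * (2 * inner ℝ (y s) (y' s))) s :=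
    fun s hs => by
      have hexp : HasDerivAt (fun s => exp (2 * μ * s)) (2 * μ * exp (2 * μ * s)) s := by
        simpa [mul_comm] using ((hasDerivAt_id s).const_mul (2 * μ)).exp
      exact hexp.mul (hy s hs).norm_sq
  refine monotoneOn_of_hasDerivWithinAt_nonneg (convex_Ici 0)
    (fun s hs => (hderiv s hs).continuousAt.continuousWithinAt)
    (fun s hs => (hderiv s (interior_subset hs)).hasDerivWithinAt) fun s hs_int => ?_
  have hs : 0 ≤ s := interior_subset hs_int
  have hinner : -(μ * ‖y s‖ ^ 2) ≤ inner ℝ (y s) (y' s) := by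
    have := abs_real_inner_le_norm (y s) (y' s)
    have := hy' s hs
    nlinarith [neg_abs_le (inner ℝ (y s) (y' s)), norm_nonneg (y s)]
  nlinarith [exp_pos (2 * μ * s)]

lemma exp_neg_mul_mul_norm_sq_le {y y' : ℝ → E} {μ : ℝ}
    (hy : ∀ s ≥ 0, HasDerivAt y (y' s) s) (hy' : ∀ s ≥ 0, ‖y' s‖ ≤ μ * ‖y s‖)
    {s : ℝ} (hs : 0 ≤ s) :
    exp (-(2 * μ) * s) * ‖y 0‖ ^ 2 ≤ ‖y s‖ ^ 2 := by
  have := monotoneOn_exp_mul_norm_sq hy hy' self_mem_Ici hs hs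
  simp only [mul_zero, exp_zero, one_mul] at this
  rw [neg_mul, exp_neg, inv_mul_le_iff₀ (exp_pos _)]
  exact this

lemma exp_neg_mul_mul_norm_sq_le_norm_apply_sq {A M : ℝ → E →L[ℝ] E} {μ : ℝ}
    (hAb : ∀ t ≥ 0, ‖A t‖ ≤ μ) (hM0 : M 0 = ContinuousLinearMap.id ℝ E)
    (hM : ∀ t ≥ 0, HasDerivAt M ((A t).comp (M t)) t) (v : E) {s : ℝ} (hs : 0 ≤ s) :
    exp (-(2 * μ) * s) * ‖v‖ ^ 2 ≤ ‖M s v‖ ^ 2 := by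
  have hy : ∀ t ≥ 0, HasDerivAt (fun t => M t v) (A t (M t v)) t := fun t ht => by
    simpa using (hM t ht).clm_apply (hasDerivAt_const t v)
  have hy' : ∀ t ≥ 0, ‖A t (M t v)‖ ≤ μ * ‖M t v‖ := fun t ht =>
    (A t).le_of_opNorm_le (hAb t ht) _
  simpa [hM0] using exp_neg_mul_mul_norm_sq_le hy hy' hs

variable [CompleteSpace E]

lemma inner_adjoint_comp_comp_apply (T Q : E →L[ℝ] E) (u v : E) :
    inner ℝ u ((ContinuousLinearMap.adjoint T).comp (Q.comp T) v) = inner ℝ (T u) (Q (T v)) :=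
  ContinuousLinearMap.adjoint_inner_right T u (Q (T v))

lemma norm_adjoint_comp_comp_le (T Q : E →L[ℝ] E) :
    ‖(ContinuousLinearMap.adjoint T).comp (Q.comp T)‖ ≤ ‖Q‖ * ‖T‖ ^ 2 := by
  calc _ ≤ ‖ContinuousLinearMap.adjoint T‖ * (‖Q‖ * ‖T‖) :=
        (ContinuousLinearMap.opNorm_comp_le _ _).trans
          (mul_le_mul_of_nonneg_left (ContinuousLinearMap.opNorm_comp_le _ _) (norm_nonneg _))
    _ = ‖Q‖ * ‖T‖ ^ 2 := by
        rw [LinearIsometryEquiv.norm_map]; ring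

lemma integrableOn_adjoint_comp_comp_Ioi {M : ℝ → E →L[ℝ] E} (hM : Continuous M)
    (Q : E →L[ℝ] E) {k lam : ℝ} (hlam : 0 < lam) (hMb : ∀ t ≥ 0, ‖M t‖ ≤ k * exp (-lam * t)) :
    IntegrableOn (fun s => (ContinuousLinearMap.adjoint (M s)).comp (Q.comp (M s))) (Ioi 0) := by
  refine Integrable.mono' ((exp_neg_integrableOn_Ioi 0 (by positivity : 0 < 2 * lam)).const_mul
    (‖Q‖ * k ^ 2)) ?_ ?_
  · exact (((ContinuousLinearMap.adjoint (𝕜 := ℝ)).continuous.comp hM).clm_comp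
      (continuous_const.clm_comp hM)).aestronglyMeasurable.restrict
  · filter_upwards [ae_restrict_mem measurableSet_Ioi] with s hs
    calc _ ≤ ‖Q‖ * ‖M s‖ ^ 2 := norm_adjoint_comp_comp_le _ _
      _ ≤ ‖Q‖ * (k * exp (-lam * s)) ^ 2 := by
          gcongr
          exact hMb s (le_of_lt hs)
      _ = ‖Q‖ * k ^ 2 * exp (-(2 * lam) * s) := by
          rw [mul_pow, ← exp_nat_mul]; ring_nf

lemma inner_integral_clm_apply {α : Type*} [MeasurableSpace α] {ν : Measure α}
    {F : α → E →L[ℝ] E} (hF : Integrable F ν) (u v : E) :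
    inner ℝ u ((∫ a, F a ∂ν) v) = ∫ a, inner ℝ u (F a v) ∂ν := by
  rw [ContinuousLinearMap.integral_apply hF, integral_inner (hF.apply_continuousLinearMap v)]

end InnerProductSpace

theorem stmt4_general {n : ℕ} (μ k lam : ℝ) (hμ : 0 < μ) (hlam : 0 < lam)
    (A M : ℝ → EuclideanSpace ℝ (Fin n) →L[ℝ] EuclideanSpace ℝ (Fin n))
    (hAb : ∀ t ≥ (0:ℝ), ‖A t‖ ≤ μ)
    (hM0 : M 0 = ContinuousLinearMap.id ℝ (EuclideanSpace ℝ (Fin n)))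
    (hM : ∀ t, HasDerivAt M ((A t).comp (M t)) t)
    (hMb : ∀ t ≥ (0:ℝ), ‖M t‖ ≤ k * Real.exp (-lam * t))
    (Q : EuclideanSpace ℝ (Fin n) →L[ℝ] EuclideanSpace ℝ (Fin n))
    (hQsym : ∀ u v, (inner ℝ (Q u) v : ℝ) = (inner ℝ u (Q v) : ℝ))
    (qlo qhi : ℝ) (hqlo : 0 < qlo)
    (hQlow : ∀ v, qlo * ‖v‖ ^ 2 ≤ (inner ℝ v (Q v) : ℝ))
    (hQhigh : ∀ v, (inner ℝ v (Q v) : ℝ) ≤ qhi * ‖v‖ ^ 2) :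
    IntegrableOn (fun s => (ContinuousLinearMap.adjoint (M s)).comp (Q.comp (M s)))
        (Set.Ioi (0:ℝ)) ∧
      ∀ P : EuclideanSpace ℝ (Fin n) →L[ℝ] EuclideanSpace ℝ (Fin n),
        P = (∫ s in Set.Ioi (0:ℝ), (ContinuousLinearMap.adjoint (M s)).comp (Q.comp (M s))) →
        (∀ u v, (inner ℝ (P u) v : ℝ) = (inner ℝ u (P v) : ℝ)) ∧
        (∀ v, qlo / (2 * μ) * ‖v‖ ^ 2 ≤ (inner ℝ v (P v) : ℝ)) ∧
        (∀ v, (inner ℝ v (P v) : ℝ) ≤ k ^ 2 * qhi / (2 * lam) * ‖v‖ ^ 2) := by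
  have hint := integrableOn_adjoint_comp_comp_Ioi
    (continuous_iff_continuousAt.2 fun t => (hM t).continuousAt) Q hlam hMb
  refine ⟨hint, fun P hP => ?_⟩
  have hform : ∀ u v, inner ℝ u (P v) = ∫ s in Ioi 0, inner ℝ (M s u) (Q (M s v)) := by
    intro u v
    rw [hP, inner_integral_clm_apply hint]
    simp only [inner_adjoint_comp_comp_apply]
  have hformInt : ∀ v, IntegrableOn (fun s => inner ℝ (M s v) (Q (M s v))) (Ioi 0) := fun v => by
    simpa only [IntegrableOn, inner_adjoint_comp_comp_apply] using
      (hint.apply_continuousLinearMap v).const_inner (𝕜 := ℝ) v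
  refine ⟨fun u v => ?_, fun v => ?_, fun v => ?_⟩
  · rw [real_inner_comm, hform, hform]
    exact integral_congr_ae (ae_of_all _ fun s => (real_inner_comm _ _).trans (hQsym _ _))
  · rw [hform, div_mul_eq_mul_div]
    refine div_le_setIntegral_Ioi_of_le (hformInt v) (by positivity) fun s hs => ?_
    calc qlo * ‖v‖ ^ 2 * exp (-(2 * μ) * s) = qlo * (exp (-(2 * μ) * s) * ‖v‖ ^ 2) := by ring
      _ ≤ qlo * ‖M s v‖ ^ 2 := by
          gcongr
          exact exp_neg_mul_mul_norm_sq_le_norm_apply_sq hAb hM0 (fun t _ => hM t) v hs.le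
      _ ≤ _ := hQlow _
  · rcases eq_or_ne v 0 with rfl | hv
    · simp
    have hqhi : 0 ≤ qhi := by
      have := (hQlow v).trans (hQhigh v)
      nlinarith [pow_pos (norm_pos_iff.2 hv) 2]
    rw [hform, div_mul_eq_mul_div]
    refine setIntegral_Ioi_le_div_of_le (hformInt v) (by positivity) fun s hs => ?_
    calc _ ≤ qhi * ‖M s v‖ ^ 2 := hQhigh _
      _ ≤ qhi * (k * exp (-lam * s) * ‖v‖) ^ 2 := by
          gcongr
          exact (M s).le_of_opNorm_le (hMb s hs.le) v
      _ = k ^ 2 * qhi * ‖v‖ ^ 2 * exp (-(2 * lam) * s) := by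
          rw [mul_pow, mul_pow, ← exp_nat_mul]; ring_nf

/-- If the fundamental matrix `M` of `x' = A(t)x` decays like `k e^{-λ t}` and `‖A t‖ ≤ μ`, then
for any symmetric positive definite `Q`, `P = ∫₀^∞ M(s)ᵀ Q M(s) ds` is well defined, symmetric and
satisfies `(λ_min(Q)/(2μ)) I ≤ P ≤ (k² λ_max(Q)/(2λ)) I`. -/
theorem stmt4 {n : ℕ} (μ k lam : ℝ) (hμ : 0 < μ) (hk : 1 ≤ k) (hlam : 0 < lam)
    (A M : ℝ → EuclideanSpace ℝ (Fin n) →L[ℝ] EuclideanSpace ℝ (Fin n))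
    (hA : Continuous A) (hAb : ∀ t ≥ (0:ℝ), ‖A t‖ ≤ μ)
    (hM0 : M 0 = ContinuousLinearMap.id ℝ (EuclideanSpace ℝ (Fin n)))
    (hM : ∀ t, HasDerivAt M ((A t).comp (M t)) t)
    (hMb : ∀ t ≥ (0:ℝ), ‖M t‖ ≤ k * Real.exp (-lam * t))
    (Q : EuclideanSpace ℝ (Fin n) →L[ℝ] EuclideanSpace ℝ (Fin n))
    (hQsym : ∀ u v, (inner ℝ (Q u) v : ℝ) = (inner ℝ u (Q v) : ℝ))
    (qlo qhi : ℝ) (hqlo : 0 < qlo)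
    (hQlow : ∀ v, qlo * ‖v‖ ^ 2 ≤ (inner ℝ v (Q v) : ℝ))
    (hQhigh : ∀ v, (inner ℝ v (Q v) : ℝ) ≤ qhi * ‖v‖ ^ 2) :
    IntegrableOn (fun s => (ContinuousLinearMap.adjoint (M s)).comp (Q.comp (M s)))
        (Set.Ioi (0:ℝ)) ∧
      ∀ P : EuclideanSpace ℝ (Fin n) →L[ℝ] EuclideanSpace ℝ (Fin n),
        P = (∫ s in Set.Ioi (0:ℝ), (ContinuousLinearMap.adjoint (M s)).comp (Q.comp (M s))) →
        (∀ u v, (inner ℝ (P u) v : ℝ) = (inner ℝ u (P v) : ℝ)) ∧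
        (∀ v, qlo / (2 * μ) * ‖v‖ ^ 2 ≤ (inner ℝ v (P v) : ℝ)) ∧
        (∀ v, (inner ℝ v (P v) : ℝ) ≤ k ^ 2 * qhi / (2 * lam) * ‖v‖ ^ 2) :=
  stmt4_general μ k lam hμ hlam A M hAb hM0 hM hMb Q hQsym qlo qhi hqlo hQlow hQhigh
end

section
/- (Compactness equivalence for constrained negativity) Let f : ℝ^m → ℝ^{n×n} be continuous symmetric-matrix-valued and g : ℝ^m → ℝ^{p×n} continuous. Suppose for every x in a compact set C and every unit vector v ∈ ℝ^n with g(x)v = 0 one has vᵀ f(x) v < 0. Then there exists ν > 0 such that vᵀ f(x) v ≤ ν |g(x)v|² for all x ∈ C and all unit vectors v ∈ ℝ^n. -/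
open scoped BigOperators
open Matrix

/-- Compactness equivalence for constrained negativity: if `vᵀ f(x) v < 0` whenever `x ∈ C`,
`|v| = 1` and `g(x)v = 0`, then there is `ν > 0` with `vᵀ f(x) v ≤ ν |g(x)v|²` on `C` for all
unit vectors `v`. -/
theorem stmt8 {m n p : ℕ}
    (C : Set (EuclideanSpace ℝ (Fin m))) (hC : IsCompact C)
    (f : EuclideanSpace ℝ (Fin m) → Matrix (Fin n) (Fin n) ℝ) (hf : Continuous f)
    (hfsym : ∀ x, (f x)ᵀ = f x)
    (g : EuclideanSpace ℝ (Fin m) → Matrix (Fin p) (Fin n) ℝ) (hg : Continuous g)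
    (hneg : ∀ x ∈ C, ∀ v : Fin n → ℝ, (∑ i, v i ^ 2) = 1 →
      (g x).mulVec v = 0 → v ⬝ᵥ (f x).mulVec v < 0) :
    ∃ ν : ℝ, 0 < ν ∧ ∀ x ∈ C, ∀ v : Fin n → ℝ, (∑ i, v i ^ 2) = 1 →
      v ⬝ᵥ (f x).mulVec v ≤ ν * ∑ i, ((g x).mulVec v i) ^ 2 := by
  classical
  -- the unit sphere
  set S : Set (Fin n → ℝ) := {v | ∑ i, v i ^ 2 = 1} with hS
  have hScont : Continuous fun v : Fin n → ℝ => ∑ i, v i ^ 2 := by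
    apply continuous_finset_sum
    intro i _
    exact (continuous_apply i).pow 2
  have hSclosed : IsClosed S := isClosed_eq hScont continuous_const
  have hSbdd : Bornology.IsBounded S := by
    apply Bornology.IsBounded.subset (Metric.isBounded_closedBall (x := (0 : Fin n → ℝ)) (r := 1))
    intro v hv
    simp only [Metric.mem_closedBall, dist_zero_right]
    rw [pi_norm_le_iff_of_nonneg zero_le_one]
    intro i
    rw [Real.norm_eq_abs, ← sq_le_one_iff_abs_le_one]
    have h1 : ∑ j, v j ^ 2 = 1 := hv
    have h2 : v i ^ 2 ≤ ∑ j, v j ^ 2 :=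
      Finset.single_le_sum (fun j _ => sq_nonneg (v j)) (Finset.mem_univ i)
    linarith
  have hScompact : IsCompact S := Metric.isCompact_of_isClosed_isBounded hSclosed hSbdd
  set K : Set (EuclideanSpace ℝ (Fin m) × (Fin n → ℝ)) := C ×ˢ S with hKdef
  have hK : IsCompact K := hC.prod hScompact
  -- the quadratic form and constraint functions
  set φ : EuclideanSpace ℝ (Fin m) × (Fin n → ℝ) → ℝ := fun q => q.2 ⬝ᵥ (f q.1).mulVec q.2 with hφdef
  set ψ : EuclideanSpace ℝ (Fin m) × (Fin n → ℝ) → ℝ := fun q => ∑ i, ((g q.1).mulVec q.2 i) ^ 2 with hψdef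
  have hfe : ∀ i j, Continuous fun x : EuclideanSpace ℝ (Fin m) => f x i j := fun i j =>
    ((continuous_apply j).comp ((continuous_apply i).comp hf))
  have hge : ∀ i j, Continuous fun x : EuclideanSpace ℝ (Fin m) => g x i j := fun i j =>
    ((continuous_apply j).comp ((continuous_apply i).comp hg))
  have hφc : Continuous φ := by
    have : φ = fun q : EuclideanSpace ℝ (Fin m) × (Fin n → ℝ) => ∑ i, q.2 i * ∑ j, f q.1 i j * q.2 j := by
      funext q
      simp [hφdef, dotProduct, mulVec]
    rw [this]
    apply continuous_finset_sum
    intro i _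
    exact ((continuous_apply i).comp continuous_snd).mul
      (continuous_finset_sum _ fun j _ =>
        ((hfe i j).comp continuous_fst).mul ((continuous_apply j).comp continuous_snd))
  have hψc : Continuous ψ := by
    have : ψ = fun q : EuclideanSpace ℝ (Fin m) × (Fin n → ℝ) => ∑ i, (∑ j, g q.1 i j * q.2 j) ^ 2 := by
      funext q
      simp [hψdef, mulVec, dotProduct]
    rw [this]
    apply continuous_finset_sum
    intro i _
    exact (continuous_finset_sum _ fun j _ =>
      ((hge i j).comp continuous_fst).mul ((continuous_apply j).comp continuous_snd)).pow 2
  have hψ_nonneg : ∀ q, 0 ≤ ψ q := fun q =>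
    Finset.sum_nonneg fun i _ => sq_nonneg _
  have hψ_zero : ∀ q : EuclideanSpace ℝ (Fin m) × (Fin n → ℝ), ψ q = 0 → (g q.1).mulVec q.2 = 0 := by
    intro q hq
    funext i
    have := (Finset.sum_eq_zero_iff_of_nonneg (fun i _ => sq_nonneg ((g q.1).mulVec q.2 i))).mp
      hq i (Finset.mem_univ i)
    have := sq_eq_zero_iff.mp this
    simpa using this
  -- on K ∩ {ψ = 0}, φ < 0
  have hKneg : ∀ q ∈ K, ψ q = 0 → φ q < 0 := by
    intro q hq hq0
    exact hneg q.1 hq.1 q.2 hq.2 (hψ_zero q hq0)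
  set U : Set (EuclideanSpace ℝ (Fin m) × (Fin n → ℝ)) := φ ⁻¹' (Set.Iio 0) with hUdef
  have hUopen : IsOpen U := isOpen_Iio.preimage hφc
  set T : Set (EuclideanSpace ℝ (Fin m) × (Fin n → ℝ)) := K \ U with hTdef
  have hT : IsCompact T := hK.diff hUopen
  rcases T.eq_empty_or_nonempty with hTe | hTne
  · -- everything is negative: ν = 1 works
    refine ⟨1, one_pos, fun x hx v hv => ?_⟩
    have hq : ((x, v) : EuclideanSpace ℝ (Fin m) × (Fin n → ℝ)) ∈ K := ⟨hx, hv⟩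
    have : ((x, v) : EuclideanSpace ℝ (Fin m) × (Fin n → ℝ)) ∈ U := by
      by_contra h
      exact (Set.eq_empty_iff_forall_notMem.mp hTe (x, v)) ⟨hq, h⟩
    have hneg' : φ (x, v) < 0 := this
    have : (0 : ℝ) ≤ 1 * ψ (x, v) := by
      have := hψ_nonneg (x, v)
      linarith
    calc v ⬝ᵥ (f x).mulVec v = φ (x, v) := rfl
      _ ≤ 1 * ψ (x, v) := by linarith
  · -- ψ attains a positive min δ on T, φ attains a max M on K
    obtain ⟨q0, hq0T, hq0min⟩ := hT.exists_isMinOn hTne hψc.continuousOn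
    have hKne : K.Nonempty := ⟨q0, hq0T.1⟩
    obtain ⟨q1, hq1K, hq1max⟩ := hK.exists_isMaxOn hKne hφc.continuousOn
    set δ := ψ q0 with hδdef
    set M := φ q1 with hMdef
    have hδpos : 0 < δ := by
      rcases lt_or_eq_of_le (hψ_nonneg q0) with h | h
      · exact h
      · exfalso
        have := hKneg q0 hq0T.1 h.symm
        exact hq0T.2 this
    set ν := (max M 0 + 1) / δ with hνdef
    have hνpos : 0 < ν := div_pos (by positivity) hδpos
    refine ⟨ν, hνpos, fun x hx v hv => ?_⟩
    have hqK : ((x, v) : EuclideanSpace ℝ (Fin m) × (Fin n → ℝ)) ∈ K := ⟨hx, hv⟩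
    by_cases hU : ((x, v) : EuclideanSpace ℝ (Fin m) × (Fin n → ℝ)) ∈ U
    · have hneg' : φ (x, v) < 0 := hU
      have h1 : (0 : ℝ) ≤ ν * ψ (x, v) := mul_nonneg hνpos.le (hψ_nonneg (x, v))
      calc v ⬝ᵥ (f x).mulVec v = φ (x, v) := rfl
        _ ≤ ν * ψ (x, v) := by linarith
    · have hqT : ((x, v) : EuclideanSpace ℝ (Fin m) × (Fin n → ℝ)) ∈ T := ⟨hqK, hU⟩
      have hψδ : δ ≤ ψ (x, v) := hq0min hqT
      have hφM : φ (x, v) ≤ M := hq1max hqK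
      have key : M ≤ ν * δ := by
        rw [hνdef, div_mul_cancel₀ _ hδpos.ne']
        have := le_max_left M (0 : ℝ)
        linarith
      calc v ⬝ᵥ (f x).mulVec v = φ (x, v) := rfl
        _ ≤ M := hφM
        _ ≤ ν * δ := key
        _ ≤ ν * ψ (x, v) := by
            apply mul_le_mul_of_nonneg_left hψδ hνpos.le
end

section
/- Let a : [0,∞) → [0,∞) satisfy a(s + jS) ≤ (k e^{-λs} + γ(s)·a(jS))·a(jS) for all s ∈ [0,S] and all integers j ≥ 0 with a(jS) ≤ r̃, where k e^{-λS} ≤ min{k, 1-ε}/2 and r̃ ≤ min{r, min{k,1-ε}/(2 sup_{s∈[0,S]} γ(s))} for some continuous γ ≥ 0 and constants k ≥ 1, λ, S > 0, ε ∈ (0,1), r > 0. If a(0) ≤ r̃, then a(iS) ≤ (1-ε)^i · r̃ for every integer i ≥ 0. -/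
/-- The induction step: under the recursive estimate and smallness of `S` and `r̃`,
`a(iS) ≤ (1-ε)^i r̃` for all `i`. -/
theorem stmt11 (a γ : ℝ → ℝ) (k lam S ε r rt : ℝ)
    (hk : 1 ≤ k) (hlam : 0 < lam) (hS : 0 < S) (hε : 0 < ε) (hε1 : ε < 1)
    (hr : 0 < r) (hrt : 0 < rt)
    (ha : ∀ t ≥ (0:ℝ), 0 ≤ a t)
    (hγc : ContinuousOn γ (Set.Icc 0 S)) (hγ0 : ∀ s ∈ Set.Icc (0:ℝ) S, 0 ≤ γ s)
    (hrec : ∀ (j : ℕ), ∀ s ∈ Set.Icc (0:ℝ) S, a (j * S) ≤ rt →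
      a (s + j * S) ≤ (k * Real.exp (-lam * s) + γ s * a (j * S)) * a (j * S))
    (hkS : k * Real.exp (-lam * S) ≤ min k (1 - ε) / 2)
    (hrt2 : rt ≤ min r (min k (1 - ε) / (2 * sSup (γ '' Set.Icc 0 S))))
    (ha0 : a 0 ≤ rt) :
    ∀ i : ℕ, a (i * S) ≤ (1 - ε) ^ i * rt := by
  have hmin : 0 < min k (1 - ε) := lt_min (by linarith) (by linarith)
  set M := sSup (γ '' Set.Icc 0 S) with hM
  have hSmem : S ∈ Set.Icc (0:ℝ) S := ⟨le_of_lt hS, le_refl S⟩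
  have hbdd : BddAbove (γ '' Set.Icc 0 S) :=
    (isCompact_Icc.image_of_continuousOn hγc).bddAbove
  have hγS : γ S ≤ M := le_csSup hbdd ⟨S, hSmem, rfl⟩
  have hrtM : rt ≤ min k (1 - ε) / (2 * M) := le_trans hrt2 (min_le_right _ _)
  have hMpos : 0 < M := by
    by_contra h
    push_neg at h
    have hle : min k (1 - ε) / (2 * M) ≤ 0 := by
      rcases lt_or_eq_of_le h with h' | h'
      · exact le_of_lt (div_neg_of_pos_of_neg hmin (by linarith))
      · rw [h', mul_zero, div_zero]
    linarith
  have hMrt : M * rt ≤ min k (1 - ε) / 2 := by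
    have h2 := (le_div_iff₀ (by positivity : (0:ℝ) < 2 * M)).mp hrtM
    nlinarith
  intro i
  induction i with
  | zero => simpa using ha0
  | succ n ih =>
    have hpow1 : (1 - ε : ℝ) ^ n ≤ 1 := pow_le_one₀ (by linarith) (by linarith)
    have hpow0 : (0:ℝ) ≤ (1 - ε) ^ n := pow_nonneg (by linarith) n
    have hain : 0 ≤ a (n * S) := ha _ (by positivity)
    have hart : a (n * S) ≤ rt := le_trans ih (by nlinarith)
    have hrec' := hrec n S hSmem hart
    have hγa : γ S * a (n * S) ≤ min k (1 - ε) / 2 := by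
      have : γ S * a (n * S) ≤ M * rt :=
        mul_le_mul hγS hart hain (le_of_lt hMpos)
      linarith
    have hcoef : k * Real.exp (-lam * S) + γ S * a (n * S) ≤ 1 - ε := by
      have := min_le_right k (1 - ε)
      linarith
    have hstep : a (S + n * S) ≤ (1 - ε) * a (n * S) := by
      calc a (S + n * S) ≤ (k * Real.exp (-lam * S) + γ S * a (n * S)) * a (n * S) := hrec'
        _ ≤ (1 - ε) * a (n * S) := mul_le_mul_of_nonneg_right hcoef hain
    have heq : ((n : ℝ) + 1) * S = S + n * S := by ring
    push_cast
    rw [heq]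
    calc a (S + n * S) ≤ (1 - ε) * a (n * S) := hstep
      _ ≤ (1 - ε) * ((1 - ε) ^ n * rt) := by
          exact mul_le_mul_of_nonneg_left ih (by linarith)
      _ = (1 - ε) ^ (n + 1) * rt := by ring
end

section
/- Let P : ℝ^n → Sym(n,ℝ) be C^1 with p·I ≤ P(x) ≤ q·I for 0 < p ≤ q, and let f : ℝ^n → ℝ^n be C^1. Suppose there is a symmetric positive definite Q with (d/dt) P(X(x,t))|_{t=0} + P(x)·Df(x) + Df(x)ᵀ·P(x) ≤ -Q for all x, where X is the flow of f. Then for every solution v(t) of the variational equation v' = Df(X(x,t))·v, the function W(t) = v(t)ᵀ P(X(x,t)) v(t) satisfies W'(t) ≤ -(λ_min(Q)/q)·W(t), and hence |v(t)| ≤ √(q/p)·e^{-λ_min(Q) t/(2q)}·|v(0)| for all t ≥ 0. -/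
/-!
Along a solution `v` of the variational equation, the derivative of `W = ⟪v, P(X) v⟫` is the
orbital derivative of `P` plus `2 ⟪v, P Df v⟫`, which by hypothesis is at most `-⟪v, Q v⟫`,
hence at most `-λ_min(Q) ‖v‖² ≤ -c W` with `c = λ_min(Q)/q`. Then `W e^{ct}` is antitone,
and sandwiching `p ‖v‖² ≤ W ≤ q ‖v‖²` turns the exponential decay of `W` into that of `‖v‖`.
-/

open Real
open scoped RealInnerProductSpace

section QuadraticFormAlongCurve

variable {E : Type*} [NormedAddCommGroup E] [InnerProductSpace ℝ E]

theorem hasDerivAt_inner_apply_self_comp {P : E → E →L[ℝ] E} {γ v : ℝ → E} {γ' v' : E} {t : ℝ}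
    (hP : DifferentiableAt ℝ P (γ t)) (hPsym : (P (γ t) : E →ₗ[ℝ] E).IsSymmetric)
    (hγ : HasDerivAt γ γ' t) (hv : HasDerivAt v v' t) :
    HasDerivAt (fun s => ⟪v s, P (γ s) (v s)⟫)
      (⟪v t, fderiv ℝ P (γ t) γ' (v t)⟫ + 2 * ⟪v t, P (γ t) v'⟫) t := by
  have hPγ : HasDerivAt (fun s => P (γ s)) (fderiv ℝ P (γ t) γ') t :=
    hP.hasFDerivAt.comp_hasDerivAt t hγ
  refine (hv.inner ℝ (hPγ.clm_apply hv)).congr_deriv ?_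
  rw [inner_add_right, ← hPsym.apply_clm, real_inner_comm v']
  ring

theorem deriv_inner_apply_comp_zero {P : E → E →L[ℝ] E} {γ : ℝ → E} {γ' w : E}
    (hP : DifferentiableAt ℝ P (γ 0)) (hPsym : (P (γ 0) : E →ₗ[ℝ] E).IsSymmetric)
    (hγ : HasDerivAt γ γ' 0) :
    deriv (fun s => ⟪w, P (γ s) w⟫) 0 = ⟪w, fderiv ℝ P (γ 0) γ' w⟫ := by
  simpa using (hasDerivAt_inner_apply_self_comp hP hPsym hγ (hasDerivAt_const 0 w)).deriv

end QuadraticFormAlongCurve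

theorem le_mul_exp_neg_of_hasDerivAt_le_neg_mul {W W' : ℝ → ℝ} {c t : ℝ}
    (hW : ∀ s, HasDerivAt W (W' s) s) (hW' : ∀ s, W' s ≤ -c * W s) (ht : 0 ≤ t) :
    W t ≤ W 0 * exp (-(c * t)) := by
  have hanti : Antitone fun s => W s * exp (c * s) := by
    refine antitone_of_hasDerivAt_nonpos
      (fun s => (hW s).mul ((hasDerivAt_id s).const_mul c).exp) fun s => ?_
    simp only [id, mul_one, Pi.zero_apply]
    nlinarith [mul_le_mul_of_nonneg_right (hW' s) (exp_pos (c * s)).le]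
  calc W t = W t * exp (c * t) * exp (-(c * t)) := by rw [mul_assoc, ← exp_add]; simp
    _ ≤ W 0 * exp (c * 0) * exp (-(c * t)) := mul_le_mul_of_nonneg_right (hanti ht) (exp_pos _).le
    _ = W 0 * exp (-(c * t)) := by simp

theorem le_sqrt_div_mul_exp_half_mul {a b p q s : ℝ} (hp : 0 < p) (ha : 0 ≤ a) (hb : 0 ≤ b)
    (h : p * a ^ 2 ≤ q * b ^ 2 * exp s) :
    a ≤ √(q / p) * exp (s / 2) * b := by
  have hsq : a ^ 2 ≤ q / p * exp s * b ^ 2 := by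
    rw [div_mul_eq_mul_div, div_mul_eq_mul_div, le_div_iff₀ hp]
    linarith
  calc a = √(a ^ 2) := (sqrt_sq ha).symm
    _ ≤ √(q / p * exp s * b ^ 2) := sqrt_le_sqrt hsq
    _ = √(q / p) * exp (s / 2) * b := by
      rw [sqrt_mul' _ (sq_nonneg b), sqrt_mul' _ (exp_pos s).le, sqrt_sq hb, exp_half]

theorem stmt14_general {n : ℕ} (p q qm : ℝ) (hp : 0 < p) (hpq : p ≤ q) (hqm : 0 < qm)
    (f : EuclideanSpace ℝ (Fin n) → EuclideanSpace ℝ (Fin n))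
    (P : EuclideanSpace ℝ (Fin n) → EuclideanSpace ℝ (Fin n) →L[ℝ] EuclideanSpace ℝ (Fin n))
    (hP : ContDiff ℝ 1 P)
    (hPsym : ∀ x u v', (inner ℝ (P x u) v' : ℝ) = (inner ℝ u (P x v') : ℝ))
    (hPlow : ∀ x v', p * ‖v'‖ ^ 2 ≤ (inner ℝ v' (P x v') : ℝ))
    (hPhigh : ∀ x v', (inner ℝ v' (P x v') : ℝ) ≤ q * ‖v'‖ ^ 2)
    (X : EuclideanSpace ℝ (Fin n) → ℝ → EuclideanSpace ℝ (Fin n))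
    (hX0 : ∀ x, X x 0 = x) (hX : ∀ x t, HasDerivAt (X x) (f (X x t)) t)
    (Q : EuclideanSpace ℝ (Fin n) →L[ℝ] EuclideanSpace ℝ (Fin n))
    (hQlow : ∀ v', qm * ‖v'‖ ^ 2 ≤ (inner ℝ v' (Q v') : ℝ))
    (hLyap : ∀ x v', deriv (fun t => (inner ℝ v' (P (X x t) v') : ℝ)) 0
        + 2 * (inner ℝ v' (P x (fderiv ℝ f x v')) : ℝ) ≤ -(inner ℝ v' (Q v') : ℝ))
    (x : EuclideanSpace ℝ (Fin n)) (v : ℝ → EuclideanSpace ℝ (Fin n))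
    (hv : ∀ t, HasDerivAt v (fderiv ℝ f (X x t) (v t)) t) :
    (∀ t ≥ (0:ℝ), deriv (fun s => (inner ℝ (v s) (P (X x s) (v s)) : ℝ)) t
        ≤ -(qm / q) * (inner ℝ (v t) (P (X x t) (v t)) : ℝ)) ∧
    (∀ t ≥ (0:ℝ), ‖v t‖ ≤ Real.sqrt (q / p) * Real.exp (-(qm * t) / (2 * q)) * ‖v 0‖) := by
  have hq : 0 < q := hp.trans_le hpq
  have hPd : Differentiable ℝ P := hP.differentiable one_ne_zero
  set W := fun s => ⟪v s, P (X x s) (v s)⟫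
  have hW (t : ℝ) := hasDerivAt_inner_apply_self_comp (hPd _) (hPsym _) (hX x t) (hv t)
  have hW' (t : ℝ) : deriv W t ≤ -(qm / q) * W t := by
    have horbital := deriv_inner_apply_comp_zero (w := v t) (hPd _) (hPsym _) (hX (X x t) 0)
    rw [hX0] at horbital
    have hL := hLyap (X x t) (v t)
    rw [horbital] at hL
    have hWq : W t ≤ q * ‖v t‖ ^ 2 := hPhigh _ _
    calc deriv W t ≤ -⟪v t, Q (v t)⟫ := (hW t).deriv ▸ hL
      _ ≤ -(qm * ‖v t‖ ^ 2) := neg_le_neg (hQlow _)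
      _ ≤ -(qm / q) * W t := by
        rw [neg_mul, neg_le_neg_iff, div_mul_eq_mul_div, div_le_iff₀ hq]
        nlinarith
  refine ⟨fun t _ => hW' t, fun t ht => ?_⟩
  rw [show -(qm * t) / (2 * q) = -(qm / q * t) / 2 by ring]
  refine le_sqrt_div_mul_exp_half_mul hp (norm_nonneg _) (norm_nonneg _) ?_
  calc p * ‖v t‖ ^ 2 ≤ W t := hPlow _ _
    _ ≤ W 0 * exp (-(qm / q * t)) :=
      le_mul_exp_neg_of_hasDerivAt_le_neg_mul (fun s => (hW s).differentiableAt.hasDerivAt) hW' ht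
    _ ≤ q * ‖v 0‖ ^ 2 * exp (-(qm / q * t)) := by gcongr; exact hPhigh _ _

/-- Contraction along the flow: if `𝔡_f P + P Df + Dfᵀ P ≤ -Q`, then along any solution `v` of
the variational equation, `W(t) = v(t)ᵀ P(X(x,t)) v(t)` satisfies `W' ≤ -(λ_min(Q)/q) W`, hence
`|v(t)| ≤ √(q/p) e^{-λ_min(Q) t/(2q)} |v(0)|`. -/
theorem stmt14 {n : ℕ} (p q qm : ℝ) (hp : 0 < p) (hpq : p ≤ q) (hqm : 0 < qm)
    (f : EuclideanSpace ℝ (Fin n) → EuclideanSpace ℝ (Fin n)) (hf : ContDiff ℝ 1 f)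
    (P : EuclideanSpace ℝ (Fin n) → EuclideanSpace ℝ (Fin n) →L[ℝ] EuclideanSpace ℝ (Fin n))
    (hP : ContDiff ℝ 1 P)
    (hPsym : ∀ x u v', (inner ℝ (P x u) v' : ℝ) = (inner ℝ u (P x v') : ℝ))
    (hPlow : ∀ x v', p * ‖v'‖ ^ 2 ≤ (inner ℝ v' (P x v') : ℝ))
    (hPhigh : ∀ x v', (inner ℝ v' (P x v') : ℝ) ≤ q * ‖v'‖ ^ 2)
    (X : EuclideanSpace ℝ (Fin n) → ℝ → EuclideanSpace ℝ (Fin n))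
    (hX0 : ∀ x, X x 0 = x) (hX : ∀ x t, HasDerivAt (X x) (f (X x t)) t)
    (Q : EuclideanSpace ℝ (Fin n) →L[ℝ] EuclideanSpace ℝ (Fin n))
    (hQsym : ∀ u v', (inner ℝ (Q u) v' : ℝ) = (inner ℝ u (Q v') : ℝ))
    (hQlow : ∀ v', qm * ‖v'‖ ^ 2 ≤ (inner ℝ v' (Q v') : ℝ))
    (hLyap : ∀ x v', deriv (fun t => (inner ℝ v' (P (X x t) v') : ℝ)) 0
        + 2 * (inner ℝ v' (P x (fderiv ℝ f x v')) : ℝ) ≤ -(inner ℝ v' (Q v') : ℝ))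
    (x : EuclideanSpace ℝ (Fin n)) (v : ℝ → EuclideanSpace ℝ (Fin n))
    (hv : ∀ t, HasDerivAt v (fderiv ℝ f (X x t) (v t)) t) :
    (∀ t ≥ (0:ℝ), deriv (fun s => (inner ℝ (v s) (P (X x s) (v s)) : ℝ)) t
        ≤ -(qm / q) * (inner ℝ (v t) (P (X x t) (v t)) : ℝ)) ∧
    (∀ t ≥ (0:ℝ), ‖v t‖ ≤ Real.sqrt (q / p) * Real.exp (-(qm * t) / (2 * q)) * ‖v 0‖) :=
  stmt14_general p q qm hp hpq hqm f P hP hPsym hPlow hPhigh X hX0 hX Q hQlow hLyap x v hv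
end
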